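/- Let σ ∈ {naive, stb, stage, pref, sem} and let 𝕊 be an extension-set realized by some σ-compact AF (i.e., σ(F) = 𝕊 for some σ-compact F), and let K_{≥2}(𝕊) = {K_1, …, K_n} be the classes of K(𝕊) of size at least 2. Then there exist numbers p_1, …, p_n with p_i ∈ P^c_σ(|K_i|) for each i such that |𝕊| = p_1 · … · p_n. -/

import Mathlib

structure AF where
  A : Finset ℕ
  R : Set (ℕ × ℕ)
  R_sub : ∀ p ∈ R, p.1 ∈ A ∧ p.2 ∈ A

namespace AF

def cf (F : AF) : Set (Set ℕ) :=
  {S | S ⊆ ↑F.A ∧ ∀ a ∈ S, ∀ b ∈ S, (a, b) ∉ F.R}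

def defends (F : AF) (S : Set ℕ) (a : ℕ) : Prop :=
  ∀ b, (b, a) ∈ F.R → ∃ s ∈ S, (s, b) ∈ F.R

def adm (F : AF) : Set (Set ℕ) :=
  {S | S ∈ F.cf ∧ ∀ a ∈ S, F.defends S a}

def rng (F : AF) (S : Set ℕ) : Set ℕ :=
  S ∪ {b | ∃ s ∈ S, (s, b) ∈ F.R}

def naive (F : AF) : Set (Set ℕ) :=
  {S | S ∈ F.cf ∧ ∀ T ∈ F.cf, S ⊆ T → S = T}

def stb (F : AF) : Set (Set ℕ) :=
  {S | S ∈ F.cf ∧ ∀ a ∈ F.A, a ∉ S → ∃ s ∈ S, (s, a) ∈ F.R}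

def pref (F : AF) : Set (Set ℕ) :=
  {S | S ∈ F.adm ∧ ∀ T ∈ F.adm, S ⊆ T → S = T}

def stage (F : AF) : Set (Set ℕ) :=
  {S | S ∈ F.cf ∧ ¬ ∃ T ∈ F.cf, F.rng S ⊂ F.rng T}

def sem (F : AF) : Set (Set ℕ) :=
  {S | S ∈ F.adm ∧ ¬ ∃ T ∈ F.adm, F.rng S ⊂ F.rng T}

end AF

abbrev Semantics := AF → Set (Set ℕ)

def StandardSemantics : Set Semantics :=
  {AF.naive, AF.stb, AF.stage, AF.pref, AF.sem}

def AFCompact (σ : Semantics) (F : AF) : Prop :=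
  ∀ a ∈ F.A, ∃ S ∈ σ F, a ∈ S

def CAF (σ : Semantics) : Set AF := {F | AFCompact σ F}

def ArgS (𝕊 : Set (Set ℕ)) : Set ℕ := ⋃₀ 𝕊

def PairsS (𝕊 : Set (Set ℕ)) : Set (ℕ × ℕ) :=
  {p | ∃ S ∈ 𝕊, p.1 ∈ S ∧ p.2 ∈ S}

def IsExtensionSet (𝕊 : Set (Set ℕ)) : Prop := (ArgS 𝕊).Finite

def AFStep (F : AF) (a b : ℕ) : Prop := (a, b) ∈ F.R ∨ (b, a) ∈ F.R

def AFConnected (F : AF) : Prop :=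
  ∀ a ∈ F.A, ∀ b ∈ F.A, Relation.ReflTransGen (AFStep F) a b

def sameComp (F : AF) (a b : ℕ) : Prop := Relation.ReflTransGen (AFStep F) a b

def comps (F : AF) : Set (Set ℕ) :=
  {K | ∃ a ∈ F.A, K = {b ∈ (↑F.A : Set ℕ) | sameComp F a b}}

def nopairs (𝕊 : Set (Set ℕ)) (a b : ℕ) : Prop :=
  a ∈ ArgS 𝕊 ∧ b ∈ ArgS 𝕊 ∧ (a, b) ∉ PairsS 𝕊

def compsS (𝕊 : Set (Set ℕ)) : Set (Set ℕ) :=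
  {K | ∃ a ∈ ArgS 𝕊, K = {b ∈ ArgS 𝕊 | Relation.ReflTransGen (nopairs 𝕊) a b}}

noncomputable def sigmaMax (σ : Semantics) (n : ℕ) : ℕ :=
  sSup {k | ∃ F : AF, F.A.card = n ∧ (σ F).ncard = k}

noncomputable def sigmaMaxCon (σ : Semantics) (n : ℕ) : ℕ :=
  sSup {k | ∃ F : AF, F.A.card = n ∧ AFConnected F ∧ (σ F).ncard = k}

noncomputable def sigmaMax2 (σ : Semantics) (n : ℕ) : ℕ :=
  sSup ({k | ∃ F : AF, F.A.card = n ∧ (σ F).ncard = k} \ {sigmaMax σ n})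

def cfSet (𝕊 : Set (Set ℕ)) : Set (Set ℕ) :=
  {S | S ⊆ ArgS 𝕊 ∧ ∀ a ∈ S, ∀ b ∈ S, (a, b) ∈ PairsS 𝕊}

def plusSet (𝕊 : Set (Set ℕ)) : Set (Set ℕ) :=
  {S | S ∈ cfSet 𝕊 ∧ ∀ T ∈ cfSet 𝕊, S ⊆ T → S = T}

def minusSet (𝕊 : Set (Set ℕ)) : Set (Set ℕ) := plusSet 𝕊 \ 𝕊

def Sig (σ : Semantics) : Set (Set (Set ℕ)) := {𝕊 | ∃ F : AF, σ F = 𝕊}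

def cSig (σ : Semantics) : Set (Set (Set ℕ)) :=
  {𝕊 | ∃ F : AF, AFCompact σ F ∧ σ F = 𝕊}

def Pcon (σ : Semantics) (n : ℕ) : Set ℕ :=
  {k | ∃ F : AF, AFCompact σ F ∧ AFConnected F ∧ F.A.card = n ∧ (σ F).ncard = k}

open Classical in
noncomputable def restrictAF (F : AF) (K : Set ℕ) : AF where
  A := F.A.filter (fun a => a ∈ K)
  R := {p | p ∈ F.R ∧ p.1 ∈ K ∧ p.2 ∈ K}
  R_sub := fun p hp => by
    have h := F.R_sub p hp.1
    simp only [Finset.mem_filter]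
    exact ⟨⟨h.1, hp.2.1⟩, ⟨h.2, hp.2.2⟩⟩

def IsExclusionMapping (𝕊 : Set (Set ℕ)) (Rm : Set (ℕ × ℕ)) : Prop :=
  ∃ f : Set ℕ → ℕ,
    (∀ S ∈ minusSet 𝕊, f S ∈ ArgS 𝕊 ∧ f S ∉ S) ∧
    Rm = {p | ∃ S ∈ minusSet 𝕊, p.1 ∈ S ∧ p.2 = f S ∧ p ∉ PairsS 𝕊}

def Independent (𝕊 : Set (Set ℕ)) : Prop :=
  ∃ Rm : Set (ℕ × ℕ), IsExclusionMapping 𝕊 Rm ∧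
    (∀ a b, (a, b) ∈ Rm → (b, a) ∈ Rm → a = b) ∧
    ∀ S ∈ 𝕊, ∀ a ∈ ArgS 𝕊 \ S, ∃ s ∈ S, (s, a) ∉ Rm ∪ PairsS 𝕊

def ConflictExplicit (σ : Semantics) (F : AF) : Prop :=
  ∀ a ∈ F.A, ∀ b ∈ F.A, (a, b) ∉ PairsS (σ F) → (a, b) ∈ F.R ∨ (b, a) ∈ F.R

noncomputable def canonicalCF (𝕊 : Set (Set ℕ)) (h : IsExtensionSet 𝕊) : AF where
  A := h.toFinset
  R := {p | p.1 ∈ ArgS 𝕊 ∧ p.2 ∈ ArgS 𝕊 ∧ p ∉ PairsS 𝕊}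
  R_sub := fun p hp => by
    exact ⟨(Set.Finite.mem_toFinset (s := ArgS 𝕊) h).2 hp.1,
      (Set.Finite.mem_toFinset (s := ArgS 𝕊) h).2 hp.2.1⟩

/-!
For each of the five semantics, membership of `S` in `σ F` can be tested separately on every
part `C` of `F` that no attack enters or leaves: `S ∈ σ F` iff `S ∩ C ∈ σ (F|C)` and
`S ∩ Cᶜ ∈ σ (F|Cᶜ)`. For `naive`, `pref`, `stage` and `sem` this is because a ⊆- or
range-maximum over a product is taken coordinatewise. Hence `σ F` is in bijection with the
product of the `σ (F|K)` over the weakly connected components `K` of `F`.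

If `F` is `σ`-compact, the classes of `K(σ F)` are exactly these components: attacking
arguments never share an extension, and arguments in different components do, by mixing an
extension containing one with an extension containing the other. A one-element component
carries no attack, since its argument lies in a conflict-free extension, so it contributes the
factor `1`; every other component `K` is itself a compact connected AF with `|K|` arguments.
-/

open Set

section SplitSets

variable {α : Type*} {C D X Y S T₁ T₂ : Set α} {P Q₁ Q₂ : Set (Set α)}
  {r r₁ r₂ : Set α → Set α}

def rangeMaximal (P : Set (Set α)) (r : Set α → Set α) : Set (Set α) :=
  {S | S ∈ P ∧ ¬ ∃ T ∈ P, r S ⊂ r T}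

lemma setOf_maximal_eq_rangeMaximal_id (P : Set (Set α)) :
    {S | S ∈ P ∧ ∀ T ∈ P, S ⊆ T → S = T} = rangeMaximal P id := by
  ext S
  simp only [rangeMaximal, id, mem_ofPred_eq, not_exists, not_and, ssubset_iff_subset_ne]
  grind

lemma rangeMaximal_powerset_id (A : Set α) : rangeMaximal (𝒫 A) id = {A} := by
  ext S
  simp only [rangeMaximal, id, mem_powerset_iff, mem_singleton_iff]
  refine ⟨fun ⟨hS, hmax⟩ => ?_, fun h => ⟨h.le, fun ⟨T, hT, hlt⟩ => ?_⟩⟩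
  · by_contra hne
    exact hmax ⟨A, subset_rfl, hS.ssubset_of_ne hne⟩
  · exact (h ▸ hlt).not_subset hT

lemma union_inter_eq_left_of_isCompl (hCD : IsCompl C D) (h₁ : T₁ ⊆ C) (h₂ : T₂ ⊆ D) :
    (T₁ ∪ T₂) ∩ C = T₁ := by
  rw [union_inter_distrib_right, inter_eq_left.2 h₁,
    (hCD.disjoint.symm.mono_left h₂).inter_eq, union_empty]

lemma ssubset_of_inter_ssubset_of_inter_subset (hCD : IsCompl C D) (h₁ : X ∩ C ⊂ Y ∩ C)
    (h₂ : X ∩ D ⊆ Y ∩ D) : X ⊂ Y := by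
  obtain rfl := hCD.compl_eq
  refine ⟨fun x hx => ?_, fun hYX => h₁.not_subset (inter_subset_inter_left C hYX)⟩
  by_cases hxC : x ∈ C
  exacts [(h₁.subset ⟨hx, hxC⟩).1, (h₂ ⟨hx, hxC⟩).1]

lemma inter_ssubset_or_inter_ssubset (hCD : IsCompl C D) (h : X ⊂ Y) :
    X ∩ C ⊂ Y ∩ C ∨ X ∩ D ⊂ Y ∩ D := by
  obtain rfl := hCD.compl_eq
  obtain ⟨x, hxY, hxX⟩ := exists_of_ssubset h
  by_cases hxC : x ∈ C
  · exact Or.inl ((ssubset_iff_of_subset (inter_subset_inter_left _ h.subset)).2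
      ⟨x, ⟨hxY, hxC⟩, fun hx => hxX hx.1⟩)
  · exact Or.inr ((ssubset_iff_of_subset (inter_subset_inter_left _ h.subset)).2
      ⟨x, ⟨hxY, hxC⟩, fun hx => hxX hx.1⟩)

lemma inter_mem_rangeMaximal (hCD : IsCompl C D) (hP : ∀ S, S ∈ P ↔ S ∩ C ∈ Q₁ ∧ S ∩ D ∈ Q₂)
    (hQ₁ : ∀ T ∈ Q₁, T ⊆ C) (hr₁ : ∀ T, r₁ (T ∩ C) = r T ∩ C)
    (hr₂ : ∀ T, r₂ (T ∩ D) = r T ∩ D) (hS : S ∈ rangeMaximal P r) :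
    S ∩ C ∈ rangeMaximal Q₁ r₁ := by
  have hSP := (hP S).1 hS.1
  refine ⟨hSP.1, fun ⟨T, hT, hlt⟩ => hS.2 ?_⟩
  have hUC : (T ∪ S ∩ D) ∩ C = T :=
    union_inter_eq_left_of_isCompl hCD (hQ₁ T hT) inter_subset_right
  have hUD : (T ∪ S ∩ D) ∩ D = S ∩ D := by
    rw [union_comm]
    exact union_inter_eq_left_of_isCompl hCD.symm inter_subset_right (hQ₁ T hT)
  refine ⟨T ∪ S ∩ D, (hP _).2 ⟨by rwa [hUC], by rw [hUD]; exact hSP.2⟩,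
    ssubset_of_inter_ssubset_of_inter_subset hCD ?_ ?_⟩
  · rwa [← hr₁, ← hr₁, hUC]
  · rw [← hr₂, ← hr₂, hUD]

lemma mem_rangeMaximal_iff (hCD : IsCompl C D)
    (hP : ∀ S, S ∈ P ↔ S ∩ C ∈ Q₁ ∧ S ∩ D ∈ Q₂) (hQ₁ : ∀ T ∈ Q₁, T ⊆ C)
    (hQ₂ : ∀ T ∈ Q₂, T ⊆ D) (hr₁ : ∀ T, r₁ (T ∩ C) = r T ∩ C)
    (hr₂ : ∀ T, r₂ (T ∩ D) = r T ∩ D) :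
    S ∈ rangeMaximal P r ↔ S ∩ C ∈ rangeMaximal Q₁ r₁ ∧ S ∩ D ∈ rangeMaximal Q₂ r₂ := by
  refine ⟨fun hS => ⟨inter_mem_rangeMaximal hCD hP hQ₁ hr₁ hr₂ hS,
    inter_mem_rangeMaximal hCD.symm (fun S => (hP S).trans and_comm) hQ₂ hr₂ hr₁ hS⟩, ?_⟩
  rintro ⟨hSC, hSD⟩
  refine ⟨(hP S).2 ⟨hSC.1, hSD.1⟩, fun ⟨T, hT, hlt⟩ => ?_⟩
  rcases inter_ssubset_or_inter_ssubset hCD hlt with h | h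
  · exact hSC.2 ⟨T ∩ C, ((hP T).1 hT).1, by rwa [hr₁, hr₁]⟩
  · exact hSD.2 ⟨T ∩ D, ((hP T).1 hT).2, by rwa [hr₂, hr₂]⟩

lemma ncard_eq_mul_of_isCompl (hCD : IsCompl C D)
    (hP : ∀ S, S ∈ P ↔ S ∩ C ∈ Q₁ ∧ S ∩ D ∈ Q₂) (hQ₁ : ∀ T ∈ Q₁, T ⊆ C)
    (hQ₂ : ∀ T ∈ Q₂, T ⊆ D) : P.ncard = Q₁.ncard * Q₂.ncard := by
  have hC (T₁ : Q₁) (T₂ : Q₂) : (T₁.1 ∪ T₂.1) ∩ C = T₁ :=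
    union_inter_eq_left_of_isCompl hCD (hQ₁ _ T₁.2) (hQ₂ _ T₂.2)
  have hD (T₁ : Q₁) (T₂ : Q₂) : (T₁.1 ∪ T₂.1) ∩ D = T₂ := by
    rw [union_comm]
    exact union_inter_eq_left_of_isCompl hCD.symm (hQ₂ _ T₂.2) (hQ₁ _ T₁.2)
  let e : P ≃ Q₁ × Q₂ :=
    { toFun := fun S => (⟨S.1 ∩ C, ((hP S).1 S.2).1⟩, ⟨S.1 ∩ D, ((hP S).1 S.2).2⟩)
      invFun := fun T => ⟨T.1.1 ∪ T.2.1, (hP _).2 ⟨(hC ..).symm ▸ T.1.2, (hD ..).symm ▸ T.2.2⟩⟩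
      left_inv := fun S => Subtype.ext (hCD.compl_eq ▸ inter_union_compl S.1 C)
      right_inv := fun T => Prod.ext (Subtype.ext (hC ..)) (Subtype.ext (hD ..)) }
  simp only [← Nat.card_coe_set_eq, Nat.card_congr e, Nat.card_prod]

end SplitSets

attribute [ext] AF

namespace AF

variable {F : AF} {C D S : Set ℕ} {a : ℕ}

def IsIsolated (F : AF) (C : Set ℕ) : Prop := ∀ p ∈ F.R, (p.1 ∈ C ↔ p.2 ∈ C)

lemma IsIsolated.compl (hC : F.IsIsolated C) : F.IsIsolated Cᶜ :=
  fun p hp => not_congr (hC p hp)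

lemma IsIsolated.restrict (hD : F.IsIsolated D) : (restrictAF F C).IsIsolated D :=
  fun p hp => hD p hp.1

lemma mem_restrictAF_A : a ∈ (restrictAF F C).A ↔ a ∈ F.A ∧ a ∈ C := by
  simp [restrictAF]

lemma coe_restrictAF_A : ((restrictAF F C).A : Set ℕ) = ↑F.A ∩ C := by
  ext; exact mem_restrictAF_A

lemma IsIsolated.mem_restrictAF_R (hC : F.IsIsolated C) {p : ℕ × ℕ} (hp : p ∈ F.R)
    (h : p.2 ∈ C) : p ∈ (restrictAF F C).R :=
  ⟨hp, (hC p hp).2 h, h⟩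

lemma restrictAF_restrictAF_of_subset (h : D ⊆ C) :
    restrictAF (restrictAF F C) D = restrictAF F D := by
  ext x
  · simp only [mem_restrictAF_A, and_assoc, and_iff_right_of_imp (@h x)]
  · exact ⟨fun ⟨⟨hp, _⟩, hD⟩ => ⟨hp, hD⟩, fun ⟨hp, hD⟩ => ⟨⟨hp, h hD.1, h hD.2⟩, hD⟩⟩

lemma subset_of_mem_cf_restrictAF (h : S ∈ (restrictAF F C).cf) : S ⊆ C :=
  fun _ hx => (mem_restrictAF_A.1 (h.1 hx)).2

lemma subset_A_of_mem_cf_restrictAF (h : S ∈ (restrictAF F C).cf) : S ⊆ F.A :=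
  fun _ hx => (mem_restrictAF_A.1 (h.1 hx)).1

lemma inter_mem_cf_restrictAF (h : S ∈ F.cf) : S ∩ C ∈ (restrictAF F C).cf :=
  ⟨fun _ hx => mem_restrictAF_A.2 ⟨h.1 hx.1, hx.2⟩, fun a ha b hb hab => h.2 a ha.1 b hb.1 hab.1⟩

lemma IsIsolated.mem_cf_iff (hC : F.IsIsolated C) :
    S ∈ F.cf ↔ S ∩ C ∈ (restrictAF F C).cf ∧ S ∩ Cᶜ ∈ (restrictAF F Cᶜ).cf := by
  refine ⟨fun h => ⟨inter_mem_cf_restrictAF h, inter_mem_cf_restrictAF h⟩,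
    fun ⟨h₁, h₂⟩ => ⟨?_, fun a ha b hb hab => ?_⟩⟩
  · rw [← inter_union_compl S C]
    exact union_subset (subset_A_of_mem_cf_restrictAF h₁) (subset_A_of_mem_cf_restrictAF h₂)
  · by_cases hbC : b ∈ C
    · have h := hC.mem_restrictAF_R hab hbC
      exact h₁.2 a ⟨ha, h.2.1⟩ b ⟨hb, hbC⟩ h
    · have h := hC.compl.mem_restrictAF_R hab hbC
      exact h₂.2 a ⟨ha, h.2.1⟩ b ⟨hb, hbC⟩ h

lemma IsIsolated.inter_mem_adm_restrictAF (hC : F.IsIsolated C) (h : S ∈ F.adm) :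
    S ∩ C ∈ (restrictAF F C).adm := by
  refine ⟨inter_mem_cf_restrictAF h.1, fun a ha b hba => ?_⟩
  obtain ⟨s, hs, hsb⟩ := h.2 a ha.1 b hba.1
  have h := hC.mem_restrictAF_R hsb hba.2.1
  exact ⟨s, ⟨hs, h.2.1⟩, h⟩

lemma IsIsolated.mem_adm_iff (hC : F.IsIsolated C) :
    S ∈ F.adm ↔ S ∩ C ∈ (restrictAF F C).adm ∧ S ∩ Cᶜ ∈ (restrictAF F Cᶜ).adm := by
  refine ⟨fun h => ⟨hC.inter_mem_adm_restrictAF h, hC.compl.inter_mem_adm_restrictAF h⟩,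
    fun ⟨h₁, h₂⟩ => ⟨hC.mem_cf_iff.2 ⟨h₁.1, h₂.1⟩, fun a ha b hba => ?_⟩⟩
  by_cases haC : a ∈ C
  · obtain ⟨s, hs, hsb⟩ := h₁.2 a ⟨ha, haC⟩ b (hC.mem_restrictAF_R hba haC)
    exact ⟨s, hs.1, hsb.1⟩
  · obtain ⟨s, hs, hsb⟩ := h₂.2 a ⟨ha, haC⟩ b (hC.compl.mem_restrictAF_R hba haC)
    exact ⟨s, hs.1, hsb.1⟩

lemma IsIsolated.inter_mem_stb_restrictAF (hC : F.IsIsolated C) (h : S ∈ F.stb) :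
    S ∩ C ∈ (restrictAF F C).stb := by
  refine ⟨inter_mem_cf_restrictAF h.1, fun a ha haS => ?_⟩
  obtain ⟨haA, haC⟩ := mem_restrictAF_A.1 ha
  obtain ⟨s, hs, hsa⟩ := h.2 a haA fun h' => haS ⟨h', haC⟩
  have h := hC.mem_restrictAF_R hsa haC
  exact ⟨s, ⟨hs, h.2.1⟩, h⟩

lemma IsIsolated.mem_stb_iff (hC : F.IsIsolated C) :
    S ∈ F.stb ↔ S ∩ C ∈ (restrictAF F C).stb ∧ S ∩ Cᶜ ∈ (restrictAF F Cᶜ).stb := by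
  refine ⟨fun h => ⟨hC.inter_mem_stb_restrictAF h, hC.compl.inter_mem_stb_restrictAF h⟩,
    fun ⟨h₁, h₂⟩ => ⟨hC.mem_cf_iff.2 ⟨h₁.1, h₂.1⟩, fun a ha haS => ?_⟩⟩
  by_cases haC : a ∈ C
  · obtain ⟨s, hs, hsa⟩ := h₁.2 a (mem_restrictAF_A.2 ⟨ha, haC⟩) fun h => haS h.1
    exact ⟨s, hs.1, hsa.1⟩
  · obtain ⟨s, hs, hsa⟩ := h₂.2 a (mem_restrictAF_A.2 ⟨ha, haC⟩) fun h => haS h.1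
    exact ⟨s, hs.1, hsa.1⟩

lemma IsIsolated.rng_restrictAF (hC : F.IsIsolated C) (S : Set ℕ) :
    (restrictAF F C).rng (S ∩ C) = F.rng S ∩ C := by
  ext b
  simp only [rng, mem_union, mem_ofPred_eq, mem_inter_iff]
  constructor
  · rintro (hb | ⟨s, hs, hsb⟩)
    exacts [⟨Or.inl hb.1, hb.2⟩, ⟨Or.inr ⟨s, hs.1, hsb.1⟩, hsb.2.2⟩]
  · rintro ⟨hb | ⟨s, hs, hsb⟩, hbC⟩
    · exact Or.inl ⟨hb, hbC⟩
    · have h := hC.mem_restrictAF_R hsb hbC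
      exact Or.inr ⟨s, ⟨hs, h.2.1⟩, h⟩

lemma cf_eq_powerset_of_R_eq_empty (h : F.R = ∅) : F.cf = 𝒫 ↑F.A := by
  ext S
  simp [cf, h]

lemma adm_eq_cf_of_R_eq_empty (h : F.R = ∅) : F.adm = F.cf := by
  ext S
  simp [adm, defends, h]

lemma rng_eq_id_of_R_eq_empty (h : F.R = ∅) : F.rng = id := by
  ext S
  simp [rng, h]

lemma stb_eq_singleton_of_R_eq_empty (h : F.R = ∅) : F.stb = {↑F.A} := by
  ext S
  simp only [stb, cf_eq_powerset_of_R_eq_empty h, h, mem_empty_iff_false, and_false,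
    exists_false, mem_ofPred_eq, mem_powerset_iff, mem_singleton_iff]
  exact ⟨fun ⟨hS, hA⟩ => hS.antisymm fun a ha => not_not.1 (hA a ha),
    fun hS => ⟨hS.le, fun a ha haS => haS (hS ▸ ha)⟩⟩

lemma naive_eq_rangeMaximal (F : AF) : F.naive = rangeMaximal F.cf id :=
  setOf_maximal_eq_rangeMaximal_id F.cf

lemma pref_eq_rangeMaximal (F : AF) : F.pref = rangeMaximal F.adm id :=
  setOf_maximal_eq_rangeMaximal_id F.adm

end AF

open AF

structure Decomposable (σ : Semantics) : Prop where
  subset_cf : ∀ F : AF, σ F ⊆ F.cf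
  mem_iff : ∀ (F : AF) (C : Set ℕ), F.IsIsolated C → ∀ S : Set ℕ,
    S ∈ σ F ↔ S ∩ C ∈ σ (restrictAF F C) ∧ S ∩ Cᶜ ∈ σ (restrictAF F Cᶜ)

lemma decomposable_cf : Decomposable AF.cf :=
  ⟨fun _ _ h => h, fun _ _ hC _ => hC.mem_cf_iff⟩

lemma decomposable_adm : Decomposable AF.adm :=
  ⟨fun _ _ h => h.1, fun _ _ hC _ => hC.mem_adm_iff⟩

lemma decomposable_stb : Decomposable AF.stb :=
  ⟨fun _ _ h => h.1, fun _ _ hC _ => hC.mem_stb_iff⟩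

lemma Decomposable.rangeMaximal {P : Semantics} (hP : Decomposable P)
    {r : AF → Set ℕ → Set ℕ}
    (hr : ∀ (F : AF) (C : Set ℕ), F.IsIsolated C → ∀ S, r (restrictAF F C) (S ∩ C) = r F S ∩ C) :
    Decomposable fun F => rangeMaximal (P F) (r F) where
  subset_cf F _ hS := hP.subset_cf F hS.1
  mem_iff F C hC _ :=
    mem_rangeMaximal_iff isCompl_compl (hP.mem_iff F C hC)
      (fun _ hT => subset_of_mem_cf_restrictAF (hP.subset_cf _ hT))
      (fun _ hT => subset_of_mem_cf_restrictAF (hP.subset_cf _ hT)) (hr F C hC) (hr F Cᶜ hC.compl)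

lemma decomposable_of_mem_standardSemantics {σ : Semantics} (hσ : σ ∈ StandardSemantics) :
    Decomposable σ := by
  simp only [StandardSemantics, mem_insert_iff, mem_singleton_iff] at hσ
  rcases hσ with rfl | rfl | rfl | rfl | rfl
  · exact funext naive_eq_rangeMaximal ▸ decomposable_cf.rangeMaximal fun _ _ _ _ => rfl
  · exact decomposable_stb
  · exact decomposable_cf.rangeMaximal fun _ _ hC => hC.rng_restrictAF
  · exact funext pref_eq_rangeMaximal ▸ decomposable_adm.rangeMaximal fun _ _ _ _ => rfl
  · exact decomposable_adm.rangeMaximal fun _ _ hC => hC.rng_restrictAF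

lemma eq_singleton_of_R_eq_empty_of_mem_standardSemantics {σ : Semantics}
    (hσ : σ ∈ StandardSemantics) {F : AF} (h : F.R = ∅) : σ F = {↑F.A} := by
  simp only [StandardSemantics, mem_insert_iff, mem_singleton_iff] at hσ
  rcases hσ with rfl | rfl | rfl | rfl | rfl
  · rw [naive_eq_rangeMaximal, cf_eq_powerset_of_R_eq_empty h, rangeMaximal_powerset_id]
  · exact stb_eq_singleton_of_R_eq_empty h
  · change rangeMaximal F.cf F.rng = _
    rw [cf_eq_powerset_of_R_eq_empty h, rng_eq_id_of_R_eq_empty h, rangeMaximal_powerset_id]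
  · rw [pref_eq_rangeMaximal, adm_eq_cf_of_R_eq_empty h, cf_eq_powerset_of_R_eq_empty h,
      rangeMaximal_powerset_id]
  · change rangeMaximal F.adm F.rng = _
    rw [adm_eq_cf_of_R_eq_empty h, cf_eq_powerset_of_R_eq_empty h, rng_eq_id_of_R_eq_empty h,
      rangeMaximal_powerset_id]

namespace AF

variable {F : AF} {C : Set ℕ} {a b : ℕ}

def component (F : AF) (a : ℕ) : Set ℕ := {b ∈ (↑F.A : Set ℕ) | sameComp F a b}

lemma sameComp_symm (h : sameComp F a b) : sameComp F b a := by
  induction h with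
  | refl => exact .refl
  | tail _ hbc ih => exact Relation.ReflTransGen.head hbc.symm ih

lemma isIsolated_component : F.IsIsolated (F.component a) := fun p hp =>
  ⟨fun h => ⟨(F.R_sub p hp).2, h.2.tail (Or.inl hp)⟩,
    fun h => ⟨(F.R_sub p hp).1, h.2.tail (Or.inr hp)⟩⟩

lemma mem_component_self (ha : a ∈ F.A) : a ∈ F.component a := ⟨ha, .refl⟩

lemma component_eq_of_mem (h : b ∈ F.component a) : F.component b = F.component a :=
  ext fun _ => ⟨fun hx => ⟨hx.1, h.2.trans hx.2⟩, fun hx => ⟨hx.1, (sameComp_symm h.2).trans hx.2⟩⟩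

lemma comps_eq_image : comps F = F.component '' ↑F.A := by
  ext K
  simp [comps, component, eq_comm]

lemma finite_comps (F : AF) : (comps F).Finite :=
  comps_eq_image ▸ F.A.finite_toSet.image _

lemma pairwiseDisjoint_comps : (comps F).PairwiseDisjoint id := by
  rw [comps_eq_image]
  rintro _ ⟨a, -, rfl⟩ _ ⟨b, -, rfl⟩ hne
  refine disjoint_left.2 fun x hxa hxb => hne ?_
  rw [← component_eq_of_mem hxa, component_eq_of_mem hxb]

lemma A_subset_sUnion_comps : (↑F.A : Set ℕ) ⊆ ⋃₀ comps F :=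
  fun x hx => ⟨F.component x, ⟨x, hx, rfl⟩, mem_component_self hx⟩

lemma IsIsolated.reflTransGen_restrictAF (hC : F.IsIsolated C) (ha : a ∈ C)
    (h : sameComp F a b) : b ∈ C ∧ Relation.ReflTransGen (AFStep (restrictAF F C)) a b := by
  induction h with
  | refl => exact ⟨ha, .refl⟩
  | tail _ hbc ih =>
    obtain ⟨hb, hab⟩ := ih
    rcases hbc with h | h
    · have h' := hC.mem_restrictAF_R h ((hC _ h).1 hb)
      exact ⟨h'.2.2, hab.tail (Or.inl h')⟩
    · have h' := hC.mem_restrictAF_R h hb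
      exact ⟨h'.2.1, hab.tail (Or.inr h')⟩

lemma afConnected_restrictAF_component : AFConnected (restrictAF F (F.component a)) := by
  intro x hx y hy
  have hx := (mem_restrictAF_A.1 hx).2
  have hy := (mem_restrictAF_A.1 hy).2
  exact (isIsolated_component.reflTransGen_restrictAF hx
    ((sameComp_symm hx.2).trans hy.2)).2

lemma card_restrictAF_A (h : C ⊆ F.A) : (restrictAF F C).A.card = C.ncard := by
  rw [← ncard_coe_finset, coe_restrictAF_A, inter_eq_right.2 h]

lemma R_eq_empty_of_card_le_one (h : F.A.card ≤ 1) (hself : ∀ a ∈ F.A, (a, a) ∉ F.R) :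
    F.R = ∅ := by
  refine eq_empty_of_forall_notMem fun ⟨a, b⟩ hab => ?_
  obtain ⟨ha, hb⟩ := F.R_sub _ hab
  obtain rfl := Finset.card_le_one.1 h a ha b hb
  exact hself a ha hab

end AF

namespace Decomposable

variable {σ : Semantics} {F : AF} {C K S T : Set ℕ} {a b : ℕ}

lemma ncard_eq_mul (hσ : Decomposable σ) (hC : F.IsIsolated C) :
    (σ F).ncard = (σ (restrictAF F C)).ncard * (σ (restrictAF F Cᶜ)).ncard :=
  ncard_eq_mul_of_isCompl isCompl_compl (hσ.mem_iff F C hC)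
    (fun _ hT => subset_of_mem_cf_restrictAF (hσ.subset_cf _ hT))
    (fun _ hT => subset_of_mem_cf_restrictAF (hσ.subset_cf _ hT))

lemma ncard_eq_prod (hσ : Decomposable σ) (hσ₀ : ∀ G : AF, G.R = ∅ → σ G = {↑G.A})
    (𝒞 : Finset (Set ℕ)) (F : AF) (hiso : ∀ C ∈ 𝒞, F.IsIsolated C)
    (hdisj : (𝒞 : Set (Set ℕ)).PairwiseDisjoint id) (hcov : (↑F.A : Set ℕ) ⊆ ⋃₀ ↑𝒞) :
    (σ F).ncard = ∏ C ∈ 𝒞, (σ (restrictAF F C)).ncard := by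
  classical
  induction 𝒞 using Finset.induction_on generalizing F with
  | empty =>
    have hA : F.A = ∅ := Finset.coe_eq_empty.1 (by simpa using hcov)
    have hR : F.R = ∅ :=
      eq_empty_of_forall_notMem fun p hp => by simpa [hA] using (F.R_sub p hp).1
    rw [hσ₀ F hR, ncard_singleton, Finset.prod_empty]
  | @insert C 𝒞 hC ih =>
    have hsub : ∀ D ∈ 𝒞, D ⊆ Cᶜ := fun D hD =>
      (hdisj (Finset.mem_insert_self C 𝒞) (Finset.mem_insert_of_mem hD)
        fun h => hC (h ▸ hD)).subset_compl_left
    have hcov' : (↑(restrictAF F Cᶜ).A : Set ℕ) ⊆ ⋃₀ ↑𝒞 := by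
      intro x hx
      obtain ⟨hxA, hxC⟩ := mem_restrictAF_A.1 hx
      obtain ⟨D, hD, hxD⟩ := hcov hxA
      rcases Finset.mem_insert.1 hD with rfl | hD
      exacts [absurd hxD hxC, ⟨D, hD, hxD⟩]
    rw [Finset.prod_insert hC, hσ.ncard_eq_mul (hiso C (Finset.mem_insert_self C 𝒞)),
      ih _ (fun D hD => (hiso D (Finset.mem_insert_of_mem hD)).restrict)
        (hdisj.subset (by simp)) hcov']
    congr 1
    exact Finset.prod_congr rfl fun D hD => by rw [restrictAF_restrictAF_of_subset (hsub D hD)]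

lemma argS_eq (hσ : Decomposable σ) (hF : AFCompact σ F) : ArgS (σ F) = ↑F.A :=
  subset_antisymm (sUnion_subset fun _ hS => (hσ.subset_cf F hS).1) fun a ha => hF a ha

lemma self_notMem_R (hσ : Decomposable σ) (hF : AFCompact σ F) (ha : a ∈ F.A) :
    (a, a) ∉ F.R :=
  let ⟨_, hS, haS⟩ := hF a ha
  (hσ.subset_cf F hS).2 a haS a haS

lemma nopairs_of_afStep (hσ : Decomposable σ) (hF : AFCompact σ F) (h : AFStep F a b) :
    nopairs (σ F) a b := by
  have hA : a ∈ F.A ∧ b ∈ F.A := h.elim (F.R_sub _) fun h => (F.R_sub _ h).symm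
  refine ⟨hσ.argS_eq hF ▸ hA.1, hσ.argS_eq hF ▸ hA.2, fun ⟨S, hS, haS, hbS⟩ => ?_⟩
  have hcf := (hσ.subset_cf F hS).2
  exact h.elim (hcf a haS b hbS) (hcf b hbS a haS)

lemma inter_union_inter_compl_mem (hσ : Decomposable σ) (hC : F.IsIsolated C)
    (hS : S ∈ σ F) (hT : T ∈ σ F) : S ∩ C ∪ T ∩ Cᶜ ∈ σ F := by
  refine (hσ.mem_iff F C hC _).2 ⟨?_, ?_⟩
  · rw [union_inter_eq_left_of_isCompl isCompl_compl inter_subset_right inter_subset_right]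
    exact ((hσ.mem_iff F C hC S).1 hS).1
  · rw [union_comm, union_inter_eq_left_of_isCompl isCompl_compl.symm inter_subset_right
      inter_subset_right]
    exact ((hσ.mem_iff F C hC T).1 hT).2

lemma sameComp_of_nopairs (hσ : Decomposable σ) (h : nopairs (σ F) a b) : sameComp F a b := by
  obtain ⟨⟨S, hS, haS⟩, ⟨T, hT, hbT⟩, hab⟩ := h
  by_contra hb
  have ha : a ∈ F.component a := mem_component_self ((hσ.subset_cf F hS).1 haS)
  exact hab ⟨_, hσ.inter_union_inter_compl_mem isIsolated_component hS hT,
    Or.inl ⟨haS, ha⟩, Or.inr ⟨hbT, fun h => hb h.2⟩⟩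

lemma reflTransGen_nopairs_eq (hσ : Decomposable σ) (hF : AFCompact σ F) :
    Relation.ReflTransGen (nopairs (σ F)) = sameComp F := by
  ext a b
  refine ⟨fun h => ?_, Relation.ReflTransGen.mono (fun _ _ => hσ.nopairs_of_afStep hF) _ _⟩
  induction h with
  | refl => exact .refl
  | tail _ hbc ih => exact ih.trans (hσ.sameComp_of_nopairs hbc)

lemma compsS_eq_comps (hσ : Decomposable σ) (hF : AFCompact σ F) : compsS (σ F) = comps F := by
  simp only [compsS, comps, hσ.argS_eq hF, hσ.reflTransGen_nopairs_eq hF]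
  rfl

lemma afCompact_restrictAF (hσ : Decomposable σ) (hF : AFCompact σ F) (hC : F.IsIsolated C) :
    AFCompact σ (restrictAF F C) := fun x hx =>
  let ⟨hxA, hxC⟩ := mem_restrictAF_A.1 hx
  let ⟨S, hS, hxS⟩ := hF x hxA
  ⟨S ∩ C, ((hσ.mem_iff F C hC S).1 hS).1, hxS, hxC⟩

lemma ncard_restrictAF_mem_Pcon (hσ : Decomposable σ) (hF : AFCompact σ F)
    (hK : K ∈ comps F) : (σ (restrictAF F K)).ncard ∈ Pcon σ K.ncard := by
  obtain ⟨a, -, rfl⟩ := hK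
  exact ⟨_, hσ.afCompact_restrictAF hF isIsolated_component, afConnected_restrictAF_component,
    card_restrictAF_A (sep_subset _ _), rfl⟩

lemma ncard_restrictAF_eq_one (hσ : Decomposable σ) (hσ₀ : ∀ G : AF, G.R = ∅ → σ G = {↑G.A})
    (hF : AFCompact σ F) (hK : K ⊆ F.A) (hK₁ : K.ncard ≤ 1) :
    (σ (restrictAF F K)).ncard = 1 := by
  have hR : (restrictAF F K).R = ∅ := R_eq_empty_of_card_le_one (card_restrictAF_A hK ▸ hK₁)
    fun a ha h => hσ.self_notMem_R hF (mem_restrictAF_A.1 ha).1 h.1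
  rw [hσ₀ _ hR, ncard_singleton]

lemma ncard_eq_prod_of_two_le (hσ : Decomposable σ) (hσ₀ : ∀ G : AF, G.R = ∅ → σ G = {↑G.A})
    (hF : AFCompact σ F) :
    (σ F).ncard = ∏ K ∈ F.finite_comps.toFinset with 2 ≤ K.ncard, (σ (restrictAF F K)).ncard := by
  rw [hσ.ncard_eq_prod hσ₀ F.finite_comps.toFinset F (fun K hK => ?_)
      (by simpa using pairwiseDisjoint_comps) (by simpa using A_subset_sUnion_comps),
    ← Finset.prod_filter_mul_prod_filter_not F.finite_comps.toFinset (2 ≤ ·.ncard),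
    Finset.prod_eq_one (s := F.finite_comps.toFinset.filter (¬ 2 ≤ ·.ncard)), mul_one]
  · intro K hK
    obtain ⟨hK, hK₁⟩ := Finset.mem_filter.1 hK
    obtain ⟨a, -, rfl⟩ := (Set.Finite.mem_toFinset _).1 hK
    exact hσ.ncard_restrictAF_eq_one hσ₀ hF (sep_subset _ _) (by omega)
  · obtain ⟨a, -, rfl⟩ := (Set.Finite.mem_toFinset _).1 hK
    exact isIsolated_component

end Decomposable

theorem extension_count_product_of_components_general (σ : Semantics)
    (hσ : σ ∈ StandardSemantics) (𝕊 : Set (Set ℕ))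
    (F : AF) (hcomp : AFCompact σ F) (hσF : σ F = 𝕊)
    (n : ℕ) (K : Fin n → Set ℕ) (hinj : Function.Injective K)
    (hrange : Set.range K = {C ∈ compsS 𝕊 | 2 ≤ C.ncard}) :
    ∃ p : Fin n → ℕ, (∀ i, p i ∈ Pcon σ ((K i).ncard)) ∧
      𝕊.ncard = ∏ i, p i := by
  classical
  subst hσF
  have hdec := decomposable_of_mem_standardSemantics hσ
  rw [hdec.compsS_eq_comps hcomp] at hrange
  have himage : Finset.univ.image K = F.finite_comps.toFinset.filter (2 ≤ ·.ncard) := by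
    apply Finset.coe_injective
    simp [hrange]
  refine ⟨fun i => (σ (restrictAF F (K i))).ncard,
    fun i => hdec.ncard_restrictAF_mem_Pcon hcomp (hrange.subset (mem_range_self i)).1, ?_⟩
  rw [hdec.ncard_eq_prod_of_two_le
      (fun _ => eq_singleton_of_R_eq_empty_of_mem_standardSemantics hσ) hcomp, ← himage, Finset.prod_image hinj.injOn]

theorem extension_count_product_of_components (σ : Semantics)
    (hσ : σ ∈ StandardSemantics) (𝕊 : Set (Set ℕ)) (hext : IsExtensionSet 𝕊)
    (F : AF) (hcomp : AFCompact σ F) (hσF : σ F = 𝕊)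
    (n : ℕ) (K : Fin n → Set ℕ) (hinj : Function.Injective K)
    (hrange : Set.range K = {C ∈ compsS 𝕊 | 2 ≤ C.ncard}) :
    ∃ p : Fin n → ℕ, (∀ i, p i ∈ Pcon σ ((K i).ncard)) ∧
      𝕊.ncard = ∏ i, p i :=
  extension_count_product_of_components_general σ hσ 𝕊 F hcomp hσF n K hinj hrange
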